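/- In G_n = P_n □ C_4 with n ≥ 2, R_{G_n}[(a_1,b_1),(a_n,b_1)] < R_{G_n}[(a_1,b_1),(a_n,b_3)]. -/

import Mathlib

/-
If `L y = e_s - e_t` then `R(s, t) = y s - y t`, so it suffices to write down the two potentials.
They are found by separation of variables: the Laplacian of `P_n □ C₄` maps `f ⊗ g` to
`(L_P f) ⊗ g + f ⊗ (L_C g)`, so expanding `e_s - e_t` in the eigenvectors of `C₄` (eigenvalues
`0, 2, 4`) leaves path equations `(L_P + μ) f = r`. For `μ = 0` the solution is linear; for
`μ > 0` it is built from `v₀ = 1, v₁ = 1 + μ, v_{j+2} = (2 + μ) v_{j+1} - v_j` and its reflection.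
The straight and the diagonal potential differ only in the mode `μ = 2`, and their drops differ
by `2 / (3 v_{n-1} - v_{n-2}) > 0`.
-/

open Matrix Finset

open Classical in
/-- The Moore–Penrose pseudoinverse of a real square matrix, defined via the
four Penrose conditions (it is unique when it exists). -/
noncomputable def Matrix.mpinv {m : Type*} [Fintype m] [DecidableEq m]
    (A : Matrix m m ℝ) : Matrix m m ℝ :=
  if h : ∃ B : Matrix m m ℝ,
      A * B * A = A ∧ B * A * B = B ∧ (A * B)ᵀ = A * B ∧ (B * A)ᵀ = B * A
  then h.choose else 0

/-- Effective resistance between `u` and `v` with respect to a (weighted)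
Laplacian matrix `L`:  `(e_u - e_v)ᵀ L⁺ (e_u - e_v)`. -/
noncomputable def effRes {m : Type*} [Fintype m] [DecidableEq m]
    (L : Matrix m m ℝ) (u v : m) : ℝ :=
  (Pi.single u 1 - Pi.single v 1) ⬝ᵥ (L.mpinv *ᵥ (Pi.single u 1 - Pi.single v 1))

/-- The (real) Laplacian matrix of a simple graph. -/
noncomputable def lapm {V : Type*} [Fintype V] [DecidableEq V]
    (G : SimpleGraph V) : Matrix V V ℝ :=
  letI := Classical.decRel G.Adj
  G.lapMatrix ℝ

/-- Resistance distance between two vertices of a simple graph. -/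
noncomputable def resDist {V : Type*} [Fintype V] [DecidableEq V]
    (G : SimpleGraph V) (u v : V) : ℝ :=
  effRes (lapm G) u v

/-- Resistance diameter of a simple graph. -/
noncomputable def resDiam {V : Type*} [Fintype V] [DecidableEq V]
    (G : SimpleGraph V) : ℝ :=
  ⨆ p : V × V, resDist G p.1 p.2

/-- The weighted Laplacian of the cone over `G` with apex `Sum.inr ()`:
edges of `G` have conductance `1` (unit resistance), and each vertex of `G`
is joined to the apex by an edge of conductance `m` (resistance `1/m`). -/
noncomputable def coneLap {V : Type*} [Fintype V] [DecidableEq V]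
    (G : SimpleGraph V) (m : ℝ) : Matrix (V ⊕ Unit) (V ⊕ Unit) ℝ :=
  letI := Classical.decRel G.Adj
  let W : Matrix (V ⊕ Unit) (V ⊕ Unit) ℝ := fun i j =>
    match i, j with
    | Sum.inl a, Sum.inl b => if G.Adj a b then 1 else 0
    | Sum.inl _, Sum.inr _ => m
    | Sum.inr _, Sum.inl _ => m
    | Sum.inr _, Sum.inr _ => 0
  Matrix.of fun i j => (if i = j then ∑ k, W i k else 0) - W i j

/-- The `k`-dimensional hypercube graph `Q_k`. -/
def hypercube (k : ℕ) : SimpleGraph (Fin k → Bool) where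
  Adj x y := (Finset.univ.filter fun i => x i ≠ y i).card = 1
  symm := by
    constructor
    intro x y h
    rw [← h]
    congr 1
    ext i
    simp [ne_comm]
  loopless := by constructor; intro x; simp

/-- The join `G + H` of two graphs on disjoint vertex sets. -/
def graphJoin {V W : Type*} (G : SimpleGraph V) (H : SimpleGraph W) :
    SimpleGraph (V ⊕ W) where
  Adj x y :=
    match x, y with
    | Sum.inl a, Sum.inl b => G.Adj a b
    | Sum.inr a, Sum.inr b => H.Adj a b
    | Sum.inl _, Sum.inr _ => True
    | Sum.inr _, Sum.inl _ => True
  symm := by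
    constructor
    rintro (a | a) (b | b) h
    · exact G.adj_symm h
    · trivial
    · trivial
    · exact H.adj_symm h
  loopless := by
    constructor
    rintro (a | a) h
    · exact G.irrefl h
    · exact H.irrefl h

section Pseudoinverse

variable {m : Type*} [Fintype m] [DecidableEq m]

theorem Matrix.IsHermitian.exists_penrose {A : Matrix m m ℝ} (hA : A.IsHermitian) :
    ∃ B : Matrix m m ℝ,
      A * B * A = A ∧ B * A * B = B ∧ (A * B)ᵀ = A * B ∧ (B * A)ᵀ = B * A := by
  set U : Matrix m m ℝ := (hA.eigenvectorUnitary : Matrix m m ℝ)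
  have hUU : star U * U = 1 := (Matrix.mem_unitaryGroup_iff').mp hA.eigenvectorUnitary.2
  let conj : (m → ℝ) → Matrix m m ℝ := fun d => U * diagonal d * star U
  have conj_mul (a b : m → ℝ) : conj a * conj b = conj (a * b) := by
    calc conj a * conj b = U * diagonal a * (star U * U) * diagonal b * star U := by
          simp only [conj, Matrix.mul_assoc]
      _ = conj (a * b) := by
          rw [hUU, Matrix.mul_one, Matrix.mul_assoc U, diagonal_mul_diagonal]; rfl
  have conj_transpose (a : m → ℝ) : (conj a)ᵀ = conj a := by
    rw [← conjTranspose_eq_transpose_of_trivial]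
    simp [conj, star_eq_conjTranspose, Matrix.mul_assoc]
  set e : m → ℝ := hA.eigenvalues
  have hA_eq : A = conj e := by simpa using hA.spectral_theorem
  -- inverting the eigenvalues pointwise, with `0⁻¹ = 0` on the kernel
  let g : m → ℝ := fun i => (e i)⁻¹
  have h_ege : e * g * e = e := by
    funext i
    by_cases h : e i = 0 <;> simp [g, h]
  have h_geg : g * e * g = g := by
    funext i
    by_cases h : e i = 0 <;> simp [g, h]
  refine ⟨conj g, ?_, ?_, ?_, ?_⟩ <;> rw [hA_eq] <;>
    simp only [conj_mul, conj_transpose, h_ege, h_geg]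

theorem effRes_eq_sub_of_mulVec_eq {L : Matrix m m ℝ} (hL : L.IsHermitian) {u v : m}
    {y : m → ℝ} (hy : L *ᵥ y = Pi.single u 1 - Pi.single v 1) :
    effRes L u v = y u - y v := by
  have hex := hL.exists_penrose
  obtain ⟨hLBL, -, -, -⟩ := hex.choose_spec
  have hLt : Lᵀ = L := by simpa [conjTranspose_eq_transpose_of_trivial] using hL.eq
  -- `(L y) ⬝ L⁺ (L y) = y ⬝ (L L⁺ L) y = y ⬝ L y`
  rw [effRes, Matrix.mpinv, dif_pos hex, ← hy, dotProduct_comm, dotProduct_mulVec,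
    ← mulVec_transpose, hLt, mulVec_mulVec, mulVec_mulVec, hLBL, hy]
  simp

end Pseudoinverse

section Laplacian

variable {V W : Type*} [Fintype V] [DecidableEq V] [Fintype W] [DecidableEq W]

theorem isHermitian_lapm (G : SimpleGraph V) : (lapm G).IsHermitian := by
  classical
  exact G.isHermitian_lapMatrix ℝ

open Classical in
theorem lapm_mulVec_apply (G : SimpleGraph V) (f : V → ℝ) (i : V) :
    (lapm G *ᵥ f) i = ∑ j, if G.Adj i j then f i - f j else 0 := by
  rw [lapm, SimpleGraph.lapMatrix_mulVec_apply, SimpleGraph.degree_eq_sum_if_adj,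
    SimpleGraph.neighborFinset_eq_filter, Finset.sum_filter, Finset.sum_mul,
    ← Finset.sum_sub_distrib]
  refine Finset.sum_congr rfl fun j _ => ?_
  split_ifs <;> simp

theorem lapm_mulVec_comp_iso {G : SimpleGraph V} (φ : G ≃g G) (f : V → ℝ) :
    lapm G *ᵥ (f ∘ φ) = (lapm G *ᵥ f) ∘ φ := by
  classical
  funext i
  simp only [lapm_mulVec_apply, Function.comp_apply]
  exact Fintype.sum_equiv φ.toEquiv _ _ fun j => by simp [φ.map_adj_iff]

theorem lapm_boxProd_mulVec_apply (G : SimpleGraph V) (H : SimpleGraph W) (f : V → ℝ)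
    (g : W → ℝ) (p : V × W) :
    (lapm (G □ H) *ᵥ fun q => f q.1 * g q.2) p
      = (lapm G *ᵥ f) p.1 * g p.2 + f p.1 * (lapm H *ᵥ g) p.2 := by
  classical
  simp only [lapm, SimpleGraph.lapMatrix_mulVec_apply, SimpleGraph.degree_boxProd,
    SimpleGraph.neighborFinset_boxProd, Finset.sum_disjUnion, Finset.sum_product,
    Finset.sum_singleton, ← Finset.mul_sum, ← Finset.sum_mul]
  push_cast
  ring

theorem lapm_boxProd_mulVec_of_eigen {G : SimpleGraph V} {H : SimpleGraph W} {μ : ℝ}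
    {f r : V → ℝ} {g : W → ℝ} (hf : lapm G *ᵥ f + μ • f = r) (hg : lapm H *ᵥ g = μ • g) :
    (lapm (G □ H) *ᵥ fun q => f q.1 * g q.2) = fun q => r q.1 * g q.2 := by
  funext q
  rw [lapm_boxProd_mulVec_apply, hg, ← hf]
  simp only [Pi.add_apply, Pi.smul_apply, smul_eq_mul]
  ring

end Laplacian

def pathGraphRevIso (n : ℕ) : SimpleGraph.pathGraph n ≃g SimpleGraph.pathGraph n where
  toEquiv := Fin.revPerm
  map_rel_iff' := by
    intro a b
    simp only [Fin.revPerm_apply, SimpleGraph.pathGraph_adj, Fin.val_rev]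
    omega

theorem lapm_pathGraph_mulVec_apply (k : ℕ) (F : ℕ → ℝ) (i : Fin (k + 1)) :
    (lapm (SimpleGraph.pathGraph (k + 1)) *ᵥ fun j => F j) i
      = (if (i : ℕ) = k then 0 else F i - F (i + 1))
        + (if (i : ℕ) = 0 then 0 else F i - F (i - 1)) := by
  classical
  have hsplit (j : Fin (k + 1)) :
      (if (SimpleGraph.pathGraph (k + 1)).Adj i j then F i - F j else 0)
        = (if (j : ℕ) = i + 1 then F i - F j else 0)
          + (if (i : ℕ) ≠ 0 then (if (j : ℕ) = i - 1 then F i - F j else 0) else 0) := by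
    simp only [SimpleGraph.pathGraph_adj]
    split_ifs <;> first | omega | simp
  simp only [lapm_mulVec_apply, hsplit, Finset.sum_add_distrib]
  rw [Fin.sum_univ_eq_sum_range (fun j => if j = (i : ℕ) + 1 then F i - F j else 0),
    Fin.sum_univ_eq_sum_range
      (fun j => if (i : ℕ) ≠ 0 then (if j = (i : ℕ) - 1 then F i - F j else 0) else 0)]
  simp only [Finset.sum_ite_eq', Finset.sum_ite_irrel, Finset.sum_const_zero, Finset.mem_range]
  have hi := i.isLt
  split_ifs <;> first | omega | simp

-- `(L_P + μ) v` vanishes on the path except at its last vertex `k`, where it is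
-- `screenedEndValue μ k`; at vertex `0` the equation reads `v₁ = (1 + μ) v₀`.
def screenedSeq (μ : ℝ) : ℕ → ℝ
  | 0 => 1
  | 1 => 1 + μ
  | k + 2 => (2 + μ) * screenedSeq μ (k + 1) - screenedSeq μ k

def screenedEndValue (μ : ℝ) (k : ℕ) : ℝ :=
  (1 + μ) * screenedSeq μ k - screenedSeq μ (k - 1)

theorem screenedSeq_pos_and_le_succ {μ : ℝ} (hμ : 0 ≤ μ) (k : ℕ) :
    0 < screenedSeq μ k ∧ screenedSeq μ k ≤ screenedSeq μ (k + 1) := by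
  induction k with
  | zero => simp [screenedSeq, hμ]
  | succ k ih =>
    obtain ⟨hpos, hle⟩ := ih
    refine ⟨by linarith, ?_⟩
    rw [screenedSeq]
    nlinarith

theorem screenedEndValue_pos {μ : ℝ} (hμ : 0 < μ) (k : ℕ) : 0 < screenedEndValue μ k := by
  have hpos := (screenedSeq_pos_and_le_succ hμ.le k).1
  have hle : screenedSeq μ (k - 1) ≤ screenedSeq μ k := by
    rcases k with _ | k
    · rfl
    · exact (screenedSeq_pos_and_le_succ hμ.le k).2
  rw [screenedEndValue]
  nlinarith

theorem lapm_pathGraph_mulVec_screenedSeq (μ : ℝ) (k : ℕ) :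
    lapm (SimpleGraph.pathGraph (k + 1)) *ᵥ (fun j => screenedSeq μ j)
        + μ • (fun j : Fin (k + 1) => screenedSeq μ j)
      = screenedEndValue μ k • Pi.single (Fin.last k) 1 := by
  funext i
  rw [Pi.add_apply, lapm_pathGraph_mulVec_apply]
  obtain ⟨_ | j, hi⟩ := i
  · rcases k with _ | k
    · simp [screenedSeq, screenedEndValue]
    · simp [screenedSeq, Fin.ext_iff]
  · by_cases hk : j + 1 = k
    · subst hk
      simp [screenedEndValue, Pi.single_apply, Fin.ext_iff]
      ring
    · simp [hk, screenedSeq, Fin.ext_iff]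
      ring

theorem lapm_pathGraph_mulVec_screenedSeq_rev (μ : ℝ) (k : ℕ) :
    lapm (SimpleGraph.pathGraph (k + 1)) *ᵥ (fun j => screenedSeq μ (Fin.rev j))
        + μ • (fun j : Fin (k + 1) => screenedSeq μ (Fin.rev j))
      = screenedEndValue μ k • Pi.single 0 1 := by
  funext i
  have h := congrFun (lapm_pathGraph_mulVec_screenedSeq μ k) (Fin.rev i)
  have hrev : (lapm (SimpleGraph.pathGraph (k + 1)) *ᵥ fun j => screenedSeq μ (Fin.rev j)) i
      = (lapm (SimpleGraph.pathGraph (k + 1)) *ᵥ fun j => screenedSeq μ j) (Fin.rev i) :=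
    congrFun (lapm_mulVec_comp_iso (pathGraphRevIso (k + 1)) fun j => screenedSeq μ j) i
  simp only [Pi.add_apply, Pi.smul_apply] at h ⊢
  rw [hrev, h]
  simp [Pi.single_apply, Fin.rev_eq_iff]

noncomputable def screenedPotential (μ : ℝ) (k : ℕ) (σ : ℝ) : Fin (k + 1) → ℝ :=
  (screenedEndValue μ k)⁻¹ •
    ((fun j => screenedSeq μ (Fin.rev j)) + σ • fun j : Fin (k + 1) => screenedSeq μ j)

theorem screenedPotential_zero (μ : ℝ) (k : ℕ) (σ : ℝ) :
    screenedPotential μ k σ 0 = (screenedEndValue μ k)⁻¹ * (screenedSeq μ k + σ) := by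
  simp [screenedPotential, screenedSeq]

theorem screenedPotential_last (μ : ℝ) (k : ℕ) (σ : ℝ) :
    screenedPotential μ k σ (Fin.last k)
      = (screenedEndValue μ k)⁻¹ * (1 + σ * screenedSeq μ k) := by
  simp [screenedPotential, screenedSeq]

theorem lapm_pathGraph_mulVec_screenedPotential {μ : ℝ} (hμ : 0 < μ) (k : ℕ) (σ : ℝ) :
    lapm (SimpleGraph.pathGraph (k + 1)) *ᵥ screenedPotential μ k σ
        + μ • screenedPotential μ k σ
      = Pi.single 0 1 + σ • Pi.single (Fin.last k) 1 := by
  have hW := (screenedEndValue_pos hμ k).ne'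
  calc _ = (screenedEndValue μ k)⁻¹ •
        ((lapm (SimpleGraph.pathGraph (k + 1)) *ᵥ (fun j => screenedSeq μ (Fin.rev j))
            + μ • (fun j : Fin (k + 1) => screenedSeq μ (Fin.rev j)))
          + σ • (lapm (SimpleGraph.pathGraph (k + 1)) *ᵥ (fun j => screenedSeq μ j)
            + μ • (fun j : Fin (k + 1) => screenedSeq μ j))) := by
        rw [screenedPotential, mulVec_smul, mulVec_add, mulVec_smul]
        module
    _ = _ := by
        rw [lapm_pathGraph_mulVec_screenedSeq, lapm_pathGraph_mulVec_screenedSeq_rev,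
          smul_comm σ, ← smul_add, smul_smul, inv_mul_cancel₀ hW, one_smul]

theorem lapm_pathGraph_mulVec_linear (k : ℕ) :
    lapm (SimpleGraph.pathGraph (k + 1)) *ᵥ (fun j : Fin (k + 1) => (k : ℝ) - j)
      = Pi.single 0 1 - Pi.single (Fin.last k) 1 := by
  funext i
  rw [lapm_pathGraph_mulVec_apply (F := fun j => (k : ℝ) - j)]
  obtain ⟨_ | j, hi⟩ := i
  · rcases k with _ | k <;> simp [Fin.ext_iff]
  · by_cases hk : j + 1 = k
    · subst hk
      simp [Pi.single_apply, Fin.ext_iff]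
    · simp [hk, Fin.ext_iff]

theorem Pi.single_prod_one_apply {α β R : Type*} [DecidableEq α] [DecidableEq β]
    [MulZeroOneClass R] (a : α) (b : β) (q : α × β) :
    (Pi.single (a, b) 1 : α × β → R) q
      = (Pi.single a 1 : α → R) q.1 * (Pi.single b 1 : β → R) q.2 := by
  simp only [Pi.single_apply, Prod.ext_iff, ite_and, ite_mul, one_mul, zero_mul]

-- Eigenvectors of `L_C` for the eigenvalues `0, 2, 4`, scaled so that `e₀ + e₂ + e₄` and
-- `e₀ - e₂ + e₄` are the indicators of the vertices `0` and `2`.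
noncomputable def cycleFourEigen0 : Fin 4 → ℝ := ![1/4, 1/4, 1/4, 1/4]
noncomputable def cycleFourEigen2 : Fin 4 → ℝ := ![1/2, 0, -1/2, 0]
noncomputable def cycleFourEigen4 : Fin 4 → ℝ := ![1/4, -1/4, 1/4, -1/4]

theorem lapm_cycleGraph_four_mulVec_apply (g : Fin 4 → ℝ) (b : Fin 4) :
    (lapm (SimpleGraph.cycleGraph 4) *ᵥ g) b = 2 * g b - g (b + 1) - g (b - 1) := by
  rw [lapm_mulVec_apply, Fin.sum_univ_four]
  fin_cases b <;> simp +decide [show (-1 : Fin 4) = 3 from rfl] <;> ring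

theorem lapm_cycleGraph_four_mulVec_eigen0 :
    lapm (SimpleGraph.cycleGraph 4) *ᵥ cycleFourEigen0 = (0 : ℝ) • cycleFourEigen0 := by
  funext b
  rw [lapm_cycleGraph_four_mulVec_apply]
  fin_cases b <;> simp [cycleFourEigen0] <;> norm_num

theorem lapm_cycleGraph_four_mulVec_eigen2 :
    lapm (SimpleGraph.cycleGraph 4) *ᵥ cycleFourEigen2 = (2 : ℝ) • cycleFourEigen2 := by
  funext b
  rw [lapm_cycleGraph_four_mulVec_apply]
  fin_cases b <;> simp [cycleFourEigen2] <;> norm_num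

theorem lapm_cycleGraph_four_mulVec_eigen4 :
    lapm (SimpleGraph.cycleGraph 4) *ᵥ cycleFourEigen4 = (4 : ℝ) • cycleFourEigen4 := by
  funext b
  rw [lapm_cycleGraph_four_mulVec_apply]
  fin_cases b <;> simp [cycleFourEigen4] <;> norm_num

theorem cycleFourEigen_sum :
    cycleFourEigen0 + cycleFourEigen2 + cycleFourEigen4 = Pi.single 0 1 := by
  funext b
  fin_cases b <;>
    norm_num +decide [cycleFourEigen0, cycleFourEigen2, cycleFourEigen4, Pi.single_apply]

theorem cycleFourEigen_sum_sub :
    cycleFourEigen0 - cycleFourEigen2 + cycleFourEigen4 = Pi.single 2 1 := by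
  funext b
  fin_cases b <;>
    norm_num +decide [cycleFourEigen0, cycleFourEigen2, cycleFourEigen4, Pi.single_apply]

-- For `σ = -1` the potential of a unit current from `(0, 0)` to `(k, 0)`, for `σ = 1` from `(0, 0)`
-- to `(k, 2)`.
noncomputable def towerPotential (k : ℕ) (σ : ℝ) : Fin (k + 1) × Fin 4 → ℝ := fun q =>
  ((k : ℝ) - q.1) * cycleFourEigen0 q.2 + screenedPotential 2 k σ q.1 * cycleFourEigen2 q.2
    + screenedPotential 4 k (-1) q.1 * cycleFourEigen4 q.2

theorem lapm_boxProd_mulVec_towerPotential (k : ℕ) (σ : ℝ) :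
    lapm (SimpleGraph.pathGraph (k + 1) □ SimpleGraph.cycleGraph 4) *ᵥ towerPotential k σ
      = fun q => (Pi.single 0 1 - Pi.single (Fin.last k) 1 : Fin (k + 1) → ℝ) q.1
            * (cycleFourEigen0 + cycleFourEigen4) q.2
          + (Pi.single 0 1 + σ • Pi.single (Fin.last k) 1 : Fin (k + 1) → ℝ) q.1
            * cycleFourEigen2 q.2 := by
  have h0 : lapm (SimpleGraph.pathGraph (k + 1)) *ᵥ (fun j : Fin (k + 1) => (k : ℝ) - j)
      + (0 : ℝ) • (fun j : Fin (k + 1) => (k : ℝ) - j)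
      = Pi.single 0 1 - Pi.single (Fin.last k) 1 := by
    rw [zero_smul, add_zero, lapm_pathGraph_mulVec_linear]
  have hsplit : towerPotential k σ
      = (fun q => ((k : ℝ) - q.1) * cycleFourEigen0 q.2)
        + (fun q => screenedPotential 2 k σ q.1 * cycleFourEigen2 q.2)
        + (fun q => screenedPotential 4 k (-1) q.1 * cycleFourEigen4 q.2) := rfl
  rw [hsplit, mulVec_add, mulVec_add,
    lapm_boxProd_mulVec_of_eigen h0 lapm_cycleGraph_four_mulVec_eigen0,
    lapm_boxProd_mulVec_of_eigen (lapm_pathGraph_mulVec_screenedPotential two_pos k σ)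
      lapm_cycleGraph_four_mulVec_eigen2,
    lapm_boxProd_mulVec_of_eigen (lapm_pathGraph_mulVec_screenedPotential four_pos k (-1))
      lapm_cycleGraph_four_mulVec_eigen4]
  funext q
  simp only [Pi.add_apply, Pi.sub_apply, Pi.smul_apply, smul_eq_mul]
  ring

theorem lapm_boxProd_mulVec_towerPotential_neg_one (k : ℕ) :
    lapm (SimpleGraph.pathGraph (k + 1) □ SimpleGraph.cycleGraph 4) *ᵥ towerPotential k (-1)
      = Pi.single (0, 0) 1 - Pi.single (Fin.last k, 0) 1 := by
  rw [lapm_boxProd_mulVec_towerPotential]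
  funext q
  simp only [Pi.sub_apply, Pi.single_prod_one_apply]
  rw [← cycleFourEigen_sum]
  simp only [Pi.add_apply, Pi.smul_apply, smul_eq_mul]
  ring

theorem lapm_boxProd_mulVec_towerPotential_one (k : ℕ) :
    lapm (SimpleGraph.pathGraph (k + 1) □ SimpleGraph.cycleGraph 4) *ᵥ towerPotential k 1
      = Pi.single (0, 0) 1 - Pi.single (Fin.last k, 2) 1 := by
  rw [lapm_boxProd_mulVec_towerPotential]
  funext q
  simp only [Pi.sub_apply, Pi.single_prod_one_apply]
  rw [← cycleFourEigen_sum, ← cycleFourEigen_sum_sub]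
  simp only [Pi.add_apply, Pi.sub_apply, Pi.smul_apply, smul_eq_mul]
  ring

theorem towerPotential_drop_sub_drop (k : ℕ) :
    (towerPotential k 1 (0, 0) - towerPotential k 1 (Fin.last k, 2))
      - (towerPotential k (-1) (0, 0) - towerPotential k (-1) (Fin.last k, 0))
      = 2 * (screenedEndValue 2 k)⁻¹ := by
  simp only [towerPotential, screenedPotential_zero, screenedPotential_last, cycleFourEigen0,
    cycleFourEigen2, cycleFourEigen4, Fin.val_zero, Fin.val_last, Fin.isValue, Matrix.cons_val,
    Nat.cast_zero]
  ring

/-- In `G_n = P_n □ C_4`, `R[(a₁,b₁),(aₙ,b₁)] < R[(a₁,b₁),(aₙ,b₃)]`. -/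
theorem resDist_blockTower_straight_lt_diag (n : ℕ) (hn : 2 ≤ n) :
    resDist ((SimpleGraph.pathGraph n).boxProd (SimpleGraph.cycleGraph 4))
        (⟨0, by omega⟩, 0) (⟨n - 1, by omega⟩, 0)
      < resDist ((SimpleGraph.pathGraph n).boxProd (SimpleGraph.cycleGraph 4))
          (⟨0, by omega⟩, 0) (⟨n - 1, by omega⟩, 2) := by
  obtain ⟨k, rfl⟩ : ∃ k, n = k + 1 := ⟨n - 1, by omega⟩
  have hfirst : (⟨0, by omega⟩ : Fin (k + 1)) = 0 := rfl
  have hlast : (⟨k + 1 - 1, by omega⟩ : Fin (k + 1)) = Fin.last k := Fin.ext (by simp)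
  have hL := isHermitian_lapm (SimpleGraph.pathGraph (k + 1) □ SimpleGraph.cycleGraph 4)
  rw [hfirst, hlast, resDist, resDist,
    effRes_eq_sub_of_mulVec_eq hL (lapm_boxProd_mulVec_towerPotential_neg_one k),
    effRes_eq_sub_of_mulVec_eq hL (lapm_boxProd_mulVec_towerPotential_one k)]
  linarith [towerPotential_drop_sub_drop k, inv_pos.mpr (screenedEndValue_pos two_pos k)]
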